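/- arXiv:1602.08654 — 3 statements merged into one kernel-verified Lean document; each statement's English description precedes it below -/
import Mathlib

section
/- Let q:(0,1)→(0,∞) be non-decreasing on (0,δ] and non-increasing on [1−δ,1) for some δ∈(0,1/2), and suppose inf_{φ≤τ≤1−φ} q(τ) > 0 for every φ∈(0,1/2). If there exists c>0 such that I(q,c) = ∫₀¹ (t(1−t))⁻¹ exp(−c·q(t)²/(t(1−t))) dt < ∞, then sup_{0<τ<1} √(τ(1−τ))/q(τ) < ∞. -/
/-!
Near `0`, integrability of `I(q,c)` makes its mass over `(τ/2, τ]` tend to `0` as `τ → 0`.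
Since `q` is non-decreasing there and `t(1-t)` is comparable to `τ` on that interval, the
integrand is at least `τ⁻¹ exp(-4c q(τ)²/τ)`, so the mass is at least `exp(-4c q(τ)²/τ)/2`.
Once this is below `1/4`, we get `τ ≤ (4c / log 2) q(τ)²`. The reflection `t ↦ 1 - t`
handles the endpoint `1`, and the lower bound on `q` handles the middle.
-/

open MeasureTheory Set Filter Topology

noncomputable def weightIntegrand (q : ℝ → ℝ) (c t : ℝ) : ℝ :=
  (t * (1 - t))⁻¹ * Real.exp (-(c * q t ^ 2) / (t * (1 - t)))

lemma weightIntegrand_one_sub (q : ℝ → ℝ) (c t : ℝ) :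
    weightIntegrand (fun s => q (1 - s)) c t = weightIntegrand q c (1 - t) := by
  simp only [weightIntegrand, sub_sub_cancel, mul_comm (1 - t) t]

lemma integrableOn_weightIntegrand_one_sub {q : ℝ → ℝ} {c : ℝ}
    (h : IntegrableOn (weightIntegrand q c) (Ioo 0 1)) :
    IntegrableOn (weightIntegrand (fun s => q (1 - s)) c) (Ioo 0 1) := by
  have hpres := (volume : Measure ℝ).measurePreserving_sub_left 1
  rw [← hpres.integrableOn_comp_preimage (MeasurableEquiv.subLeft (1 : ℝ)).measurableEmbedding,
    preimage_const_sub_Ioo, sub_zero, sub_self] at h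
  exact h.congr_fun (fun t _ => (weightIntegrand_one_sub q c t).symm) measurableSet_Ioo

lemma inv_mul_exp_le_weightIntegrand {q : ℝ → ℝ} {c τ t : ℝ} (hc : 0 ≤ c) (hτ : τ ≤ 1 / 2)
    (ht : t ∈ Ioc (τ / 2) τ) (hq : q t ^ 2 ≤ q τ ^ 2) :
    τ⁻¹ * Real.exp (-(4 * c * q τ ^ 2) / τ) ≤ weightIntegrand q c t := by
  obtain ⟨ht₁, ht₂⟩ := ht
  have hτ₀ : 0 < τ := by linarith
  have hprod_pos : 0 < t * (1 - t) := mul_pos (by linarith) (by linarith)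
  have hprod_le : t * (1 - t) ≤ τ := by nlinarith
  have hprod_ge : τ / 4 ≤ t * (1 - t) := by nlinarith
  have hexp : c * q t ^ 2 / (t * (1 - t)) ≤ 4 * c * q τ ^ 2 / τ :=
    calc c * q t ^ 2 / (t * (1 - t)) ≤ c * q τ ^ 2 / (τ / 4) :=
          div_le_div₀ (by positivity) (mul_le_mul_of_nonneg_left hq hc) (by positivity) hprod_ge
      _ = 4 * c * q τ ^ 2 / τ := by field_simp
  refine mul_le_mul (inv_anti₀ hprod_pos hprod_le) (Real.exp_le_exp.2 ?_) (Real.exp_nonneg _)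
    (inv_nonneg.2 hprod_pos.le)
  rw [neg_div, neg_div]
  exact neg_le_neg hexp

lemma exp_le_two_mul_setIntegral_weightIntegrand {q : ℝ → ℝ} {c τ : ℝ} (hc : 0 ≤ c)
    (hτ₀ : 0 < τ) (hτ : τ ≤ 1 / 2) (hmono : MonotoneOn q (Ioc 0 τ))
    (hq : ∀ t ∈ Ioc 0 τ, 0 ≤ q t) (hint : IntegrableOn (weightIntegrand q c) (Ioc (τ / 2) τ)) :
    Real.exp (-(4 * c * q τ ^ 2) / τ) ≤ 2 * ∫ t in Ioc (τ / 2) τ, weightIntegrand q c t := by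
  have hbound : ∀ t ∈ Ioc (τ / 2) τ,
      τ⁻¹ * Real.exp (-(4 * c * q τ ^ 2) / τ) ≤ weightIntegrand q c t := by
    intro t ht
    have ht' : t ∈ Ioc 0 τ := ⟨by linarith [ht.1], ht.2⟩
    exact inv_mul_exp_le_weightIntegrand hc hτ ht <| pow_le_pow_left₀ (hq t ht')
      (hmono ht' (right_mem_Ioc.2 hτ₀) ht.2) 2
  have h := setIntegral_ge_of_const_le_real measurableSet_Ioc measure_Ioc_lt_top.ne hbound hint
  rw [measureReal_def, Real.volume_Ioc, ENNReal.toReal_ofReal (by linarith)] at h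
  have hτ_half : τ⁻¹ * Real.exp (-(4 * c * q τ ^ 2) / τ) * (τ - τ / 2)
      = Real.exp (-(4 * c * q τ ^ 2) / τ) / 2 := by
    field_simp; ring
  linarith

lemma tendsto_setIntegral_Ioc_half_nhdsGT_zero {f : ℝ → ℝ} {δ : ℝ} (hδ : 0 < δ)
    (hf : IntegrableOn f (Ioo 0 δ)) :
    Tendsto (fun τ => ∫ t in Ioc (τ / 2) τ, f t) (𝓝[>] 0) (𝓝 0) := by
  have hvol : Tendsto (fun τ : ℝ => volume (Ioc (τ / 2) τ)) (𝓝[>] 0) (𝓝 0) := by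
    simp only [Real.volume_Ioc]
    rw [← ENNReal.ofReal_zero]
    refine ENNReal.tendsto_ofReal (tendsto_nhdsWithin_of_tendsto_nhds ?_)
    simpa using (tendsto_id (x := 𝓝 (0 : ℝ))).sub (tendsto_id.div_const 2)
  have hsmall := hf.tendsto_setIntegral_nhds_zero (s := fun τ => Ioc (τ / 2) τ)
    (tendsto_of_tendsto_of_tendsto_of_le_of_le tendsto_const_nhds hvol (fun _ => zero_le)
      (fun τ => Measure.restrict_apply_le _ _))
  refine hsmall.congr' ?_
  filter_upwards [Ioo_mem_nhdsGT hδ] with τ hτ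
  rw [Measure.restrict_restrict_of_subset]
  exact fun t ht => ⟨by linarith [ht.1, hτ.1], ht.2.trans_lt hτ.2⟩

lemma sqrt_mul_one_sub_div_le_of_exp_lt {c τ Q : ℝ} (hτ₀ : 0 < τ) (hQ : 0 < Q)
    (h : Real.exp (-(4 * c * Q ^ 2) / τ) < 1 / 2) :
    √(τ * (1 - τ)) / Q ≤ √(4 * c / Real.log 2) := by
  have hlog₂ : 0 < Real.log 2 := Real.log_pos one_lt_two
  have hlog : Real.log 2 < 4 * c * Q ^ 2 / τ := by
    rw [← Real.lt_log_iff_exp_lt one_half_pos, one_div, Real.log_inv, neg_div] at h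
    linarith
  have hratio : τ * (1 - τ) / Q ^ 2 ≤ 4 * c / Real.log 2 := by
    rw [lt_div_iff₀ hτ₀] at hlog
    have hτ_le : τ * (1 - τ) ≤ τ := by nlinarith
    rw [div_le_div_iff₀ (by positivity) hlog₂]
    nlinarith [mul_le_mul_of_nonneg_right hτ_le hlog₂.le]
  rw [← Real.sqrt_sq hQ.le, ← Real.sqrt_div' _ (sq_nonneg Q)]
  exact Real.sqrt_le_sqrt hratio

lemma eventually_sqrt_mul_one_sub_div_le {q : ℝ → ℝ} {c δ : ℝ} (hc : 0 ≤ c) (hδ : 0 < δ)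
    (hmono : MonotoneOn q (Ioc 0 δ)) (hq : ∀ t ∈ Ioc 0 δ, 0 < q t)
    (hI : IntegrableOn (weightIntegrand q c) (Ioo 0 δ)) :
    ∀ᶠ τ in 𝓝[>] 0, √(τ * (1 - τ)) / q τ ≤ √(4 * c / Real.log 2) := by
  filter_upwards [Ioo_mem_nhdsGT (lt_min hδ one_half_pos),
    (tendsto_setIntegral_Ioc_half_nhdsGT_zero hδ hI).eventually
      (gt_mem_nhds (by norm_num : (0 : ℝ) < 1 / 4))]
    with τ ⟨hτ₀, hτ⟩ hsmall
  have hτδ : τ ≤ δ := (lt_min_iff.1 hτ).1.le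
  have hτ_half : τ ≤ 1 / 2 := (lt_min_iff.1 hτ).2.le
  have hexp := exp_le_two_mul_setIntegral_weightIntegrand hc hτ₀ hτ_half
    (hmono.mono (Ioc_subset_Ioc_right hτδ)) (fun t ht => (hq t ⟨ht.1, ht.2.trans hτδ⟩).le)
    (hI.mono_set fun t ht => ⟨by linarith [ht.1], ht.2.trans_lt (lt_min_iff.1 hτ).1⟩)
  exact sqrt_mul_one_sub_div_le_of_exp_lt hτ₀ (hq τ ⟨hτ₀, hτδ⟩) (by linarith)

lemma exists_forall_Ioo_le_of_eventually {g : ℝ → ℝ} {M₀ M₁ : ℝ}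
    (h₀ : ∀ᶠ τ in 𝓝[>] 0, g τ ≤ M₀) (h₁ : ∀ᶠ τ in 𝓝[>] 0, g (1 - τ) ≤ M₁)
    (hmid : ∀ φ ∈ Ioo (0 : ℝ) (1 / 2), ∃ M, ∀ τ ∈ Icc φ (1 - φ), g τ ≤ M) :
    ∃ M, ∀ τ ∈ Ioo (0 : ℝ) 1, g τ ≤ M := by
  obtain ⟨a, ha, hsub⟩ := mem_nhdsGT_iff_exists_Ioo_subset.1 (h₀.and h₁)
  set φ := min a (1 / 4)
  have hφ : φ ∈ Ioo (0 : ℝ) (1 / 2) :=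
    ⟨lt_min ha (by norm_num), (min_le_right _ _).trans_lt (by norm_num)⟩
  have hφa : φ ≤ a := min_le_left _ _
  obtain ⟨M, hM⟩ := hmid φ hφ
  refine ⟨max M₀ (max M₁ M), fun τ ⟨hτ₀, hτ₁⟩ => ?_⟩
  rcases lt_or_ge τ φ with hτ | hτ
  · exact le_max_of_le_left (hsub ⟨hτ₀, hτ.trans_le hφa⟩).1
  rcases lt_or_ge (1 - τ) φ with hτ' | hτ'
  · have h := (hsub ⟨sub_pos.2 hτ₁, hτ'.trans_le hφa⟩).2
    rw [sub_sub_cancel] at h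
    exact le_max_of_le_right (le_max_of_le_left h)
  · exact le_max_of_le_right (le_max_of_le_right (hM τ ⟨hτ, by linarith⟩))

/-- If the weight function `q : (0,1) → (0,∞)` is non-decreasing near 0, non-increasing
near 1, bounded below away from 0 on compact subintervals, and `I(q,c) < ∞` for some
`c > 0`, then `sup_{0<τ<1} √(τ(1-τ))/q(τ) < ∞`. -/
theorem weight_function_sup_finite (q : ℝ → ℝ)
    (hq_pos : ∀ t ∈ Ioo (0:ℝ) 1, 0 < q t)
    (hmono : ∃ δ ∈ Ioo (0:ℝ) (1/2),
      MonotoneOn q (Ioc 0 δ) ∧ AntitoneOn q (Ico (1 - δ) 1))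
    (hinf : ∀ φ ∈ Ioo (0:ℝ) (1/2), ∃ ε > 0, ∀ τ ∈ Icc φ (1 - φ), ε ≤ q τ)
    (hI : ∃ c > 0, IntegrableOn
      (fun t => (t * (1 - t))⁻¹ * Real.exp (-(c * (q t)^2) / (t * (1 - t))))
      (Ioo (0:ℝ) 1) volume) :
    ∃ M : ℝ, ∀ τ ∈ Ioo (0:ℝ) 1, Real.sqrt (τ * (1 - τ)) / q τ ≤ M := by
  obtain ⟨δ, ⟨hδ₀, hδ⟩, hmono₀, hanti₁⟩ := hmono
  obtain ⟨c, hc, hI⟩ := hI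
  have hIoo : Ioo 0 δ ⊆ Ioo (0 : ℝ) 1 := Ioo_subset_Ioo_right (by linarith)
  have hmono₁ : MonotoneOn (fun t => q (1 - t)) (Ioc 0 δ) := fun s hs t ht hst =>
    hanti₁ ⟨by linarith [ht.2], by linarith [ht.1]⟩ ⟨by linarith [hs.2], by linarith [hs.1]⟩
      (by linarith)
  have near₀ := eventually_sqrt_mul_one_sub_div_le hc.le hδ₀ hmono₀
    (fun t ht => hq_pos t ⟨ht.1, by linarith [ht.2]⟩) (hI.mono_set hIoo)
  have near₁ := eventually_sqrt_mul_one_sub_div_le hc.le hδ₀ hmono₁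
    (fun t ht => hq_pos _ ⟨by linarith [ht.2], by linarith [ht.1]⟩)
    ((integrableOn_weightIntegrand_one_sub hI).mono_set hIoo)
  refine exists_forall_Ioo_le_of_eventually (M₁ := √(4 * c / Real.log 2)) near₀
    (near₁.mono fun τ h => ?_) fun φ hφ => ?_
  · rwa [sub_sub_cancel, mul_comm]
  · obtain ⟨ε, hε, hε_le⟩ := hinf φ hφ
    exact ⟨1 / ε, fun τ hτ => div_le_div₀ zero_le_one
      (Real.sqrt_le_one.2 (by nlinarith [sq_nonneg (τ - 1 / 2)])) hε (hε_le τ hτ)⟩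
end

section
/- Let α₀∈ℝ, α≥0, β∈[0,1), let Y:ℤ→[0,∞), and let X:ℤ→ℝ be a bounded function satisfying the recursion X_t = α₀ + α·Y_{t−1} + β·X_{t−1} for all t∈ℤ. Then for every t∈ℤ the series Σ_{k=0}^∞ β^k·α·Y_{t−1−k} converges and X_t = α₀/(1−β) + α·Σ_{k=0}^∞ β^k·Y_{t−1−k}. -/
/-!
Unrolling the recursion `n` times gives
`X t = ∑_{k<n} β^k (α₀ + α Y_{t-1-k}) + β^n X_{t-n}`, and the remainder tends to `0` because
`X` is bounded and `|β| < 1`. The series converges absolutely since the recursion itself bounds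
`α₀ + α Y_{t-1} = X_t - β X_{t-1}` by `2 sup |X|`.
-/

open Finset Filter Topology

section AffineRecursion

variable {E : Type*} [NormedAddCommGroup E] [NormedSpace ℝ E]

theorem eq_sum_range_pow_smul_add_pow_smul {X b : ℤ → E} {β : ℝ}
    (h : ∀ t, X t = b t + β • X (t - 1)) (t : ℤ) (n : ℕ) :
    X t = ∑ k ∈ range n, β ^ k • b (t - k) + β ^ n • X (t - n) := by
  induction n with
  | zero => simp
  | succ n ih =>
    rw [ih, h (t - n), sum_range_succ, smul_add, pow_succ, mul_smul, add_assoc]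
    push_cast
    rw [sub_add_eq_sub_sub]

theorem hasSum_pow_smul_of_forall_eq {X b : ℤ → E} {β : ℝ} (hβ : |β| < 1) {M : ℝ}
    (hX : ∀ t, ‖X t‖ ≤ M) (h : ∀ t, X t = b t + β • X (t - 1)) (t : ℤ) :
    HasSum (fun k : ℕ => β ^ k • b (t - k)) (X t) := by
  have hb : ∀ s, ‖b s‖ ≤ 2 * M := fun s => by
    have hXM : |β| * ‖X (s - 1)‖ ≤ 1 * M :=
      mul_le_mul hβ.le (hX _) (norm_nonneg _) zero_le_one
    calc ‖b s‖ = ‖X s - β • X (s - 1)‖ := by rw [h s, add_sub_cancel_right]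
      _ ≤ ‖X s‖ + |β| * ‖X (s - 1)‖ := by
        rw [← Real.norm_eq_abs, ← norm_smul]
        exact norm_sub_le _ _
      _ ≤ 2 * M := by linarith [hX s]
  have hnorm : Summable fun k : ℕ => ‖β ^ k • b (t - k)‖ := by
    refine ((summable_geometric_of_lt_one (abs_nonneg β) hβ).mul_left (2 * M)).of_nonneg_of_le
      (fun _ => norm_nonneg _) fun k => ?_
    rw [norm_smul, norm_pow, Real.norm_eq_abs, mul_comm]
    exact mul_le_mul_of_nonneg_right (hb _) (by positivity)
  have hrem : Tendsto (fun n : ℕ => β ^ n • X (t - n)) atTop (𝓝 0) := by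
    have hgeom := (tendsto_pow_atTop_nhds_zero_of_lt_one (abs_nonneg β) hβ).mul_const M
    rw [zero_mul] at hgeom
    refine squeeze_zero_norm (fun n => ?_) hgeom
    rw [norm_smul, norm_pow, Real.norm_eq_abs]
    exact mul_le_mul_of_nonneg_left (hX _) (by positivity)
  have hpartial : (fun n : ℕ => ∑ k ∈ range n, β ^ k • b (t - k))
      = fun n : ℕ => X t - β ^ n • X (t - n) :=
    funext fun n => eq_sub_of_add_eq (eq_sum_range_pow_smul_add_pow_smul h t n).symm
  rw [hasSum_iff_tendsto_nat_of_summable_norm hnorm, hpartial]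
  simpa using tendsto_const_nhds.sub hrem

end AffineRecursion

theorem ingarch_infinite_past_representation_general
    (α₀ α β : ℝ) (hβ0 : 0 ≤ β) (hβ1 : β < 1)
    (Y : ℤ → ℝ)
    (X : ℤ → ℝ) (hXbdd : ∃ M : ℝ, ∀ t, |X t| ≤ M)
    (hrec : ∀ t : ℤ, X t = α₀ + α * Y (t - 1) + β * X (t - 1)) :
    ∀ t : ℤ,
      Summable (fun k : ℕ => β ^ k * (α * Y (t - 1 - (k : ℤ)))) ∧
      X t = α₀ / (1 - β) + α * ∑' k : ℕ, β ^ k * Y (t - 1 - (k : ℤ)) := by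
  intro t
  obtain ⟨M, hM⟩ := hXbdd
  have hβ : |β| < 1 := by rwa [abs_of_nonneg hβ0]
  have hfull : HasSum (fun k : ℕ => β ^ k * (α₀ + α * Y (t - 1 - k))) (X t) := by
    simpa only [sub_right_comm _ (1 : ℤ), smul_eq_mul] using
      hasSum_pow_smul_of_forall_eq (b := fun s => α₀ + α * Y (s - 1)) hβ hM hrec t
  have hconst : HasSum (fun k : ℕ => β ^ k * α₀) (α₀ / (1 - β)) := by
    simpa only [div_eq_inv_mul] using (hasSum_geometric_of_lt_one hβ0 hβ1).mul_right α₀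
  have hY : HasSum (fun k : ℕ => β ^ k * (α * Y (t - 1 - k))) (X t - α₀ / (1 - β)) := by
    simpa only [mul_add, add_sub_cancel_left] using hfull.sub hconst
  refine ⟨hY.summable, ?_⟩
  rw [← tsum_mul_left]
  simp only [mul_left_comm α]
  rw [hY.tsum_eq]
  ring

/-- In the INGARCH(1,1) model, if the conditional mean process `X` is bounded and
satisfies `X_t = α₀ + α Y_{t−1} + β X_{t−1}` for all `t ∈ ℤ`, then the series
`Σ_k β^k α Y_{t−1−k}` converges and `X_t = α₀/(1−β) + α Σ_k β^k Y_{t−1−k}`. -/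
theorem ingarch_infinite_past_representation
    (α₀ α β : ℝ) (hα : 0 ≤ α) (hβ0 : 0 ≤ β) (hβ1 : β < 1)
    (Y : ℤ → ℝ) (hY : ∀ t, 0 ≤ Y t)
    (X : ℤ → ℝ) (hXbdd : ∃ M : ℝ, ∀ t, |X t| ≤ M)
    (hrec : ∀ t : ℤ, X t = α₀ + α * Y (t - 1) + β * X (t - 1)) :
    ∀ t : ℤ,
      Summable (fun k : ℕ => β ^ k * (α * Y (t - 1 - (k : ℤ)))) ∧
      X t = α₀ / (1 - β) + α * ∑' k : ℕ, β ^ k * Y (t - 1 - (k : ℤ)) :=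
  ingarch_infinite_past_representation_general α₀ α β hβ0 hβ1 Y X hXbdd hrec
end

section
/- Let α₁, α₂, β ≥ 0 and ℓ ≥ 0. Then for all x, x', y, y' ≥ 0, |(α₁·max(y−ℓ,0) + α₂·min(y,ℓ) + β·x) − (α₁·max(y'−ℓ,0) + α₂·min(y',ℓ) + β·x')| ≤ β·|x−x'| + max(α₁,α₂)·|y−y'|. In particular, if max(α₁,α₂)+β < 1, the threshold regression function f_θ(x,y) = α₀ + α₁·max(y−ℓ,0) + α₂·min(y,ℓ) + β·x satisfies the contraction condition with δ₁ = β and δ₂ = max(α₁,α₂), δ₁+δ₂ < 1. -/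
/-!
The threshold map splits `y` as `max (y - ℓ) 0 + min y ℓ`, a sum of two nondecreasing
functions of `y`. Hence the increments of the two pieces between `y'` and `y` have the same
sign and add up to `y - y'`, so weighting them by `α₁, α₂ ≥ 0` changes `|y - y'|` by a factor
at most `max α₁ α₂`; the linear term `β x` contributes `β |x - x'|`.
-/

lemma abs_mul_add_mul_le_max_mul_abs_add {R : Type*} [CommRing R] [LinearOrder R]
    [IsStrictOrderedRing R] {α₁ α₂ a b : R} (hα₁ : 0 ≤ α₁) (hα₂ : 0 ≤ α₂) (hab : 0 ≤ a * b) :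
    |α₁ * a + α₂ * b| ≤ max α₁ α₂ * |a + b| :=
  calc |α₁ * a + α₂ * b| ≤ α₁ * |a| + α₂ * |b| := by
        simpa only [abs_mul, abs_of_nonneg hα₁, abs_of_nonneg hα₂] using
          abs_add_le (α₁ * a) (α₂ * b)
    _ ≤ max α₁ α₂ * |a| + max α₁ α₂ * |b| := by gcongr <;> simp
    _ = max α₁ α₂ * |a + b| := by
        rw [← mul_add, (abs_add_eq_add_abs_iff a b).mpr (mul_nonneg_iff.mp hab)]

lemma max_sub_zero_add_min (y ℓ : ℝ) : max (y - ℓ) 0 + min y ℓ = y := by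
  rcases le_total y ℓ with h | h <;> simp [h]

lemma abs_threshold_increment_le (ℓ : ℝ) {α₁ α₂ : ℝ} (hα₁ : 0 ≤ α₁) (hα₂ : 0 ≤ α₂) (y y' : ℝ) :
    |α₁ * (max (y - ℓ) 0 - max (y' - ℓ) 0) + α₂ * (min y ℓ - min y' ℓ)|
      ≤ max α₁ α₂ * |y - y'| := by
  have hmonovary : Monovary (fun y : ℝ => max (y - ℓ) 0) (fun y => min y ℓ) :=
    Monotone.monovary (fun _ _ h => max_le_max_right 0 (sub_le_sub_right h ℓ))
      (fun _ _ h => min_le_min_right ℓ h)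
  have hsum : (max (y - ℓ) 0 - max (y' - ℓ) 0) + (min y ℓ - min y' ℓ) = y - y' := by
    linarith [max_sub_zero_add_min y ℓ, max_sub_zero_add_min y' ℓ]
  simpa only [hsum] using
    abs_mul_add_mul_le_max_mul_abs_add hα₁ hα₂ (hmonovary.sub_mul_sub_nonneg y' y)

theorem threshold_contraction_general (α₁ α₂ β ℓ : ℝ)
    (hα₁ : 0 ≤ α₁) (hα₂ : 0 ≤ α₂) (hβ : 0 ≤ β) :
    (∀ x x' y y' : ℝ, 0 ≤ x → 0 ≤ x' → 0 ≤ y → 0 ≤ y' →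
      |(α₁ * max (y - ℓ) 0 + α₂ * min y ℓ + β * x)
          - (α₁ * max (y' - ℓ) 0 + α₂ * min y' ℓ + β * x')|
        ≤ β * |x - x'| + max α₁ α₂ * |y - y'|) ∧
    (max α₁ α₂ + β < 1 →
      ∀ α₀ x x' y y' : ℝ, 0 ≤ x → 0 ≤ x' → 0 ≤ y → 0 ≤ y' →
        |(α₀ + α₁ * max (y - ℓ) 0 + α₂ * min y ℓ + β * x)
            - (α₀ + α₁ * max (y' - ℓ) 0 + α₂ * min y' ℓ + β * x')|
          ≤ β * |x - x'| + max α₁ α₂ * |y - y'| ∧ β + max α₁ α₂ < 1) := by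
  have lipschitz (x x' y y' : ℝ) :
      |(α₁ * max (y - ℓ) 0 + α₂ * min y ℓ + β * x)
          - (α₁ * max (y' - ℓ) 0 + α₂ * min y' ℓ + β * x')|
        ≤ β * |x - x'| + max α₁ α₂ * |y - y'| :=
    calc _ = |β * (x - x') + (α₁ * (max (y - ℓ) 0 - max (y' - ℓ) 0)
              + α₂ * (min y ℓ - min y' ℓ))| := by ring_nf
      _ ≤ |β * (x - x')| + |α₁ * (max (y - ℓ) 0 - max (y' - ℓ) 0)
              + α₂ * (min y ℓ - min y' ℓ)| := abs_add_le _ _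
      _ ≤ β * |x - x'| + max α₁ α₂ * |y - y'| := by
        rw [abs_mul, abs_of_nonneg hβ]
        gcongr
        exact abs_threshold_increment_le ℓ hα₁ hα₂ y y'
  refine ⟨fun x x' y y' _ _ _ _ => lipschitz x x' y y',
    fun hlt α₀ x x' y y' _ _ _ _ => ⟨?_, by linarith⟩⟩
  convert lipschitz x x' y y' using 2
  ring

/-- The threshold regression function satisfies the Lipschitz bound
`|(α₁ max(y−ℓ,0) + α₂ min(y,ℓ) + βx) − (α₁ max(y'−ℓ,0) + α₂ min(y',ℓ) + βx')|
  ≤ β|x−x'| + max(α₁,α₂)|y−y'|`; in particular, if `max(α₁,α₂)+β < 1`, then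
`f_θ(x,y) = α₀ + α₁ max(y−ℓ,0) + α₂ min(y,ℓ) + βx` satisfies the contraction
condition (A(Θ)) with `δ₁ = β`, `δ₂ = max(α₁,α₂)` and `δ₁ + δ₂ < 1`. -/
theorem threshold_contraction (α₁ α₂ β ℓ : ℝ)
    (hα₁ : 0 ≤ α₁) (hα₂ : 0 ≤ α₂) (hβ : 0 ≤ β) (hℓ : 0 ≤ ℓ) :
    (∀ x x' y y' : ℝ, 0 ≤ x → 0 ≤ x' → 0 ≤ y → 0 ≤ y' →
      |(α₁ * max (y - ℓ) 0 + α₂ * min y ℓ + β * x)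
          - (α₁ * max (y' - ℓ) 0 + α₂ * min y' ℓ + β * x')|
        ≤ β * |x - x'| + max α₁ α₂ * |y - y'|) ∧
    (max α₁ α₂ + β < 1 →
      ∀ α₀ x x' y y' : ℝ, 0 ≤ x → 0 ≤ x' → 0 ≤ y → 0 ≤ y' →
        |(α₀ + α₁ * max (y - ℓ) 0 + α₂ * min y ℓ + β * x)
            - (α₀ + α₁ * max (y' - ℓ) 0 + α₂ * min y' ℓ + β * x')|
          ≤ β * |x - x'| + max α₁ α₂ * |y - y'| ∧ β + max α₁ α₂ < 1) :=
  threshold_contraction_general α₁ α₂ β ℓ hα₁ hα₂ hβ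
end
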